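/- Let δ be a diagonal section, g_U the upper boundary function of the region D_f(δ). Then for every x₀ ∈ [0,1], max_{y ∈ [x₀,1]} (C̄_δ(x₀,y) − B_δ(x₀,y)) = C̄_δ(x₀, g_U(x₀)) − B_δ(x₀, g_U(x₀)) = min_{t ∈ [x₀, g_U(x₀)]} δ̂(t). -/

import Mathlib

open Set MeasureTheory Filter

def IsDiagonalSection (d : ℝ → ℝ) : Prop :=
  (∀ x ∈ Icc (0:ℝ) 1, d x ∈ Icc (0:ℝ) 1) ∧
  (∀ x ∈ Icc (0:ℝ) 1, d x ≤ x) ∧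
  (∀ x ∈ Icc (0:ℝ) 1, ∀ y ∈ Icc (0:ℝ) 1, x ≤ y → 0 ≤ d y - d x ∧ d y - d x ≤ 2*(y-x)) ∧
  d 1 = 1

noncomputable def TVd (d : ℝ → ℝ) (a b : ℝ) : ℝ :=
  variationOnFromTo (fun t => t - d t) (Icc (0:ℝ) 1) a b

noncomputable def fdelta (d : ℝ → ℝ) (x y : ℝ) : ℝ :=
  y - (1/2)*((x - d x) + (y - d y) + (TVd d 0 y - TVd d 0 x))

def DfO (d : ℝ → ℝ) : Set (ℝ × ℝ) :=
  {p | p.1 ∈ Icc (0:ℝ) 1 ∧ p.2 ∈ Icc (0:ℝ) 1 ∧ fdelta d p.1 p.2 < min p.1 p.2}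

def Df (d : ℝ → ℝ) : Set (ℝ × ℝ) :=
  closure (DfO d) ∪ {p | p.1 ∈ Icc (0:ℝ) 1 ∧ p.2 = p.1}

noncomputable def gU (d : ℝ → ℝ) (x : ℝ) : ℝ := sSup {y | (x, y) ∈ Df d}

noncomputable def gL (d : ℝ → ℝ) (x : ℝ) : ℝ := sInf {y | (x, y) ∈ Df d}

noncomputable def Bber (d : ℝ → ℝ) (x y : ℝ) : ℝ :=
  min x y - sInf ((fun t => t - d t) '' Icc (min x y) (max x y))

/-!
Write `δ̂ = id - δ`; it is 1-Lipschitz, so its variation on `[y, y']` is at most `y' - y`, and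
hence `f^δ(x, y) + δ̂(y) ≤ f^δ(x, y') + δ̂(t)` whenever `y ≤ t ≤ y'`. At `y* = g_U(x)` one has
`f^δ(x, y*) = x`: `≤` because `(x, y*)` lies in the closed set `D_f(δ)`, `≥` because otherwise
points slightly above `y*` would still lie in `D_f°(δ)`. So the difference at `y*` equals
`min_{[x, y*]} δ̂`. For any other `y` the difference is `min(x, y, f^δ(x, y)) - x + min_{[x, y]} δ̂`,
which is at most `δ̂(t)` for every `t ∈ [x, y*]`: trivially if `t ≤ y`, and by the estimate above
with `y' = y*` if `t > y`.
-/

section Variation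

variable {f : ℝ → ℝ} {s : Set ℝ} {C : NNReal} {a b : ℝ}

lemma LipschitzOnWith.variationOnFromTo_le_mul (hf : LipschitzOnWith C f s) (hab : a ≤ b) :
    variationOnFromTo f s a b ≤ C * (b - a) := by
  have hid : eVariationOn id (s ∩ Icc a b) ≤ ENNReal.ofReal (b - a) :=
    (eVariationOn.mono _ (inter_subset_inter_left _ (subset_univ s))).trans
      (((monotoneOn_id (s := univ)).eVariationOn_eq (mem_univ a) (mem_univ b)).le)
  have hvar : eVariationOn f (s ∩ Icc a b) ≤ C * ENNReal.ofReal (b - a) :=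
    ((hf.mono inter_subset_left).comp_eVariationOn_le (mapsTo_id _)).trans (by gcongr)
  rw [variationOnFromTo.eq_of_le _ _ hab]
  calc (eVariationOn f (s ∩ Icc a b)).toReal ≤ (C * ENNReal.ofReal (b - a)).toReal :=
        ENNReal.toReal_mono (by finiteness) hvar
    _ = C * (b - a) := by simp [ENNReal.toReal_ofReal (sub_nonneg.2 hab)]

lemma LipschitzOnWith.variationOnFromTo (hf : LipschitzOnWith C f s) (ha : a ∈ s) :
    LipschitzOnWith C (variationOnFromTo f s a) s := by
  refine LipschitzOnWith.of_le_add_mul C fun x hx y hy => ?_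
  rw [← variationOnFromTo.add hf.locallyBoundedVariationOn ha hy hx]
  rcases le_total y x with hyx | hxy
  · have := hf.variationOnFromTo_le_mul hyx
    rw [Real.dist_eq, abs_of_nonneg (sub_nonneg.2 hyx)]
    linarith
  · have := variationOnFromTo.nonpos_of_ge f s hxy
    have : 0 ≤ (C : ℝ) * dist x y := by positivity
    linarith

end Variation

section Diagonal

variable {d : ℝ → ℝ} {x y y' t : ℝ}

lemma IsDiagonalSection.lipschitzOnWith (hd : IsDiagonalSection d) :
    LipschitzOnWith 1 (fun t => t - d t) (Icc 0 1) := by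
  refine LipschitzOnWith.of_le_add fun x hx y hy => ?_
  rw [Real.dist_eq]
  rcases le_total x y with hxy | hyx
  · have := (hd.2.2.1 x hx y hy hxy).2
    rw [abs_of_nonpos (sub_nonpos.2 hxy)]
    linarith
  · have := (hd.2.2.1 y hy x hx hyx).1
    rw [abs_of_nonneg (sub_nonneg.2 hyx)]
    linarith

lemma continuousOn_fdelta (he : LipschitzOnWith 1 (fun t => t - d t) (Icc 0 1)) :
    ContinuousOn (fun p : ℝ × ℝ => fdelta d p.1 p.2) (Icc 0 1 ×ˢ Icc 0 1) := by
  have hT := (he.variationOnFromTo (left_mem_Icc.2 zero_le_one)).continuousOn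
  have he := he.continuousOn
  have hfst : MapsTo Prod.fst (Icc (0 : ℝ) 1 ×ˢ Icc (0 : ℝ) 1) (Icc 0 1) := fun p hp => hp.1
  have hsnd : MapsTo Prod.snd (Icc (0 : ℝ) 1 ×ˢ Icc (0 : ℝ) 1) (Icc 0 1) := fun p hp => hp.2
  unfold fdelta TVd
  exact continuousOn_snd.sub (continuousOn_const.mul
    (((he.comp continuousOn_fst hfst).add (he.comp continuousOn_snd hsnd)).add
      ((hT.comp continuousOn_snd hsnd).sub (hT.comp continuousOn_fst hfst))))

lemma fdelta_self (x : ℝ) : fdelta d x x = x - (x - d x) := by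
  simp only [fdelta, sub_self]
  ring

lemma fdelta_le_fdelta_add (he : LipschitzOnWith 1 (fun t => t - d t) (Icc 0 1))
    (hy : y ∈ Icc 0 1) (hy' : y' ∈ Icc 0 1) (hyy' : y ≤ y') :
    fdelta d x y' ≤ fdelta d x y + (y' - y) := by
  have := abs_sub_le_iff.1 (variationOnFromTo.abs_sub_le_sub_of_le he.locallyBoundedVariationOn
    (left_mem_Icc.2 zero_le_one) hy hy' hyy')
  simp only [fdelta, TVd]
  linarith

lemma fdelta_add_le_fdelta_add (he : LipschitzOnWith 1 (fun t => t - d t) (Icc 0 1))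
    (hy : y ∈ Icc 0 1) (hy' : y' ∈ Icc 0 1) (ht : t ∈ Icc y y') :
    fdelta d x y + (y - d y) ≤ fdelta d x y' + (t - d t) := by
  have h0 : (0 : ℝ) ∈ Icc 0 1 := left_mem_Icc.2 zero_le_one
  have htI : t ∈ Icc (0 : ℝ) 1 := ⟨hy.1.trans ht.1, ht.2.trans hy'.2⟩
  have hT := he.variationOnFromTo_le_mul (ht.1.trans ht.2)
  rw [← variationOnFromTo.sub_right he.locallyBoundedVariationOn h0 hy' hy] at hT
  have hyt := he.le_add_mul hy htI
  have hy't := he.le_add_mul hy' htI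
  rw [Real.dist_eq, abs_of_nonpos (sub_nonpos.2 ht.1)] at hyt
  rw [Real.dist_eq, abs_of_nonneg (sub_nonneg.2 ht.2)] at hy't
  simp only [fdelta, TVd, NNReal.coe_one, one_mul] at *
  linarith

lemma le_fdelta_one (hd : IsDiagonalSection d) (hx : x ∈ Icc 0 1) : x ≤ fdelta d x 1 := by
  have := fdelta_add_le_fdelta_add hd.lipschitzOnWith (x := x) hx (right_mem_Icc.2 zero_le_one)
    (right_mem_Icc.2 hx.2)
  rw [fdelta_self, hd.2.2.2] at this
  linarith

lemma Df_subset_fdelta_le (hd : IsDiagonalSection d) :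
    Df d ⊆ {p | p.2 ∈ Icc 0 1 ∧ fdelta d p.1 p.2 ≤ p.1} := by
  have hK : IsClosed {p ∈ Icc (0 : ℝ) 1 ×ˢ Icc (0 : ℝ) 1 | fdelta d p.1 p.2 ≤ min p.1 p.2} :=
    (isClosed_Icc.prod isClosed_Icc).isClosed_le (continuousOn_fdelta hd.lipschitzOnWith)
      (continuous_fst.min continuous_snd).continuousOn
  have hDfO : DfO d ⊆ {p ∈ Icc (0 : ℝ) 1 ×ˢ Icc (0 : ℝ) 1 | fdelta d p.1 p.2 ≤ min p.1 p.2} :=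
    fun p hp => ⟨⟨hp.1, hp.2.1⟩, hp.2.2.le⟩
  rintro ⟨x, y⟩ (hp | ⟨hx, rfl : y = x⟩)
  · obtain ⟨⟨-, hy⟩, hf⟩ := closure_minimal hDfO hK hp
    exact ⟨hy, hf.trans (min_le_left _ _)⟩
  · refine ⟨hx, ?_⟩
    rw [fdelta_self]
    linarith [hd.2.1 _ hx]

lemma isClosed_Df : IsClosed (Df d) :=
  isClosed_closure.union ((isClosed_Icc.preimage continuous_fst).inter
    (isClosed_eq continuous_snd continuous_fst))

lemma bddAbove_slice_Df (hd : IsDiagonalSection d) (x : ℝ) : BddAbove {y | (x, y) ∈ Df d} :=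
  ⟨1, fun _ hy => (Df_subset_fdelta_le hd hy).1.2⟩

lemma le_gU (hd : IsDiagonalSection d) (hx : x ∈ Icc 0 1) : x ≤ gU d x :=
  le_csSup (bddAbove_slice_Df hd x) (Or.inr ⟨hx, rfl⟩)

lemma gU_mem_Df (hd : IsDiagonalSection d) (hx : x ∈ Icc 0 1) : (x, gU d x) ∈ Df d :=
  (isClosed_Df.preimage (Continuous.prodMk_right x)).csSup_mem ⟨x, Or.inr ⟨hx, rfl⟩⟩
    (bddAbove_slice_Df hd x)

lemma fdelta_gU (hd : IsDiagonalSection d) (hx : x ∈ Icc 0 1) : fdelta d x (gU d x) = x := by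
  obtain ⟨hgI, hle⟩ := Df_subset_fdelta_le hd (gU_mem_Df hd hx)
  refine le_antisymm hle (not_lt.1 fun hlt => ?_)
  rcases hgI.2.eq_or_lt with hg1 | hg1
  · exact (le_fdelta_one hd hx).not_gt (hg1 ▸ hlt)
  -- a point slightly above `gU d x` would still lie in `DfO d`
  set y := min 1 (gU d x + (x - fdelta d x (gU d x)) / 2)
  have hgy : gU d x < y := lt_min hg1 (by linarith)
  have hyI : y ∈ Icc (0 : ℝ) 1 := ⟨hgI.1.trans hgy.le, min_le_left _ _⟩
  have hfy : fdelta d x y < min x y := by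
    have := fdelta_le_fdelta_add hd.lipschitzOnWith (x := x) hgI hyI hgy.le
    have := min_le_right 1 (gU d x + (x - fdelta d x (gU d x)) / 2)
    rw [min_eq_left ((le_gU hd hx).trans hgy.le)]
    linarith
  exact hgy.not_ge (le_csSup (bddAbove_slice_Df hd x) (Or.inl (subset_closure ⟨hx, hyI, hfy⟩)))

lemma Bber_of_le (hxy : x ≤ y) :
    Bber d x y = x - sInf ((fun t => t - d t) '' Icc x y) := by
  rw [Bber, min_eq_left hxy, max_eq_right hxy]

lemma min_fdelta_sub_Bber_le (he : LipschitzOnWith 1 (fun t => t - d t) (Icc 0 1))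
    (hx : x ∈ Icc 0 1) (hy : y ∈ Icc x 1) (hy' : y' ≤ 1) (hfy' : fdelta d x y' ≤ x)
    (ht : t ∈ Icc x y') :
    min x (min y (fdelta d x y)) - Bber d x y ≤ t - d t := by
  have hyI : y ∈ Icc (0 : ℝ) 1 := ⟨hx.1.trans hy.1, hy.2⟩
  have hbdd : BddBelow ((fun t => t - d t) '' Icc x y) :=
    (isCompact_Icc.image_of_continuousOn
      (he.continuousOn.mono (Icc_subset_Icc hx.1 hy.2))).bddBelow
  rw [Bber_of_le hy.1]
  rcases le_total t y with hty | hyt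
  · have := csInf_le hbdd (mem_image_of_mem _ ⟨ht.1, hty⟩)
    have := min_le_left x (min y (fdelta d x y))
    linarith
  · have := csInf_le hbdd (mem_image_of_mem _ (right_mem_Icc.2 hy.1))
    have := (min_le_right x _).trans (min_le_right y (fdelta d x y))
    have := fdelta_add_le_fdelta_add he (x := x) hyI ⟨hx.1.trans (ht.1.trans ht.2), hy'⟩ ⟨hyt, ht.2⟩
    linarith

end Diagonal

theorem section_max_at_gU (d : ℝ → ℝ) (hd : IsDiagonalSection d)
    (x₀ : ℝ) (hx : x₀ ∈ Icc (0:ℝ) 1) :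
    IsGreatest {v | ∃ y ∈ Icc x₀ 1,
        v = min x₀ (min y (fdelta d x₀ y)) - Bber d x₀ y}
      (min x₀ (min (gU d x₀) (fdelta d x₀ (gU d x₀))) - Bber d x₀ (gU d x₀)) ∧
    min x₀ (min (gU d x₀) (fdelta d x₀ (gU d x₀))) - Bber d x₀ (gU d x₀)
      = sInf ((fun t => t - d t) '' Icc x₀ (gU d x₀)) := by
  have hxg := le_gU hd hx
  have hg1 := (Df_subset_fdelta_le hd (gU_mem_Df hd hx)).1.2
  have hfg := fdelta_gU hd hx
  have hval : min x₀ (min (gU d x₀) (fdelta d x₀ (gU d x₀))) - Bber d x₀ (gU d x₀)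
      = sInf ((fun t => t - d t) '' Icc x₀ (gU d x₀)) := by
    rw [hfg, min_eq_right (min_le_right _ _), min_eq_right hxg, Bber_of_le hxg]
    ring
  refine ⟨⟨⟨gU d x₀, ⟨hxg, hg1⟩, rfl⟩, ?_⟩, hval⟩
  rintro v ⟨y, hy, rfl⟩
  rw [hval]
  exact le_csInf ((nonempty_Icc.2 hxg).image _) (forall_mem_image.2 fun t ht =>
    min_fdelta_sub_Bber_le hd.lipschitzOnWith hx hy hg1 hfg.le ht)
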